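/- arXiv:2007.14505 — 2 statements merged into one kernel-verified Lean document; each statement's English description precedes it below -/
import Mathlib

section
/- Let U be an n-molecule in a regular directed complex with n > 0, and suppose U contains a unique n-dimensional element x. Then ∂^α x is a submolecule of ∂^α U for each sign α. -/
/-- An oriented graded poset: a finite graded poset together with an
orientation (edge-labelling of the Hasse diagram in `Bool`, `true` = `+`,
`false` = `-`).  `orient y x` is the label of the edge `y → x` when `x ⋖ y`. -/
structure OGP where
  carrier : Type
  [po : PartialOrder carrier]
  [fin : Finite carrier]
  dim : carrier → ℕ
  graded : ∀ x y : carrier, x ⋖ y → dim y = dim x + 1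
  min_dim : ∀ x : carrier, IsMin x → dim x = 0
  orient : carrier → carrier → Bool

attribute [instance] OGP.po OGP.fin

namespace OGP

variable (P : OGP)

/-- Downward closure of a subset. -/
def cl (U : Set P.carrier) : Set P.carrier := {x | ∃ y ∈ U, x ≤ y}

/-- A subset is closed if it is downward closed. -/
def IsClosed (U : Set P.carrier) : Prop := P.cl U ⊆ U

/-- `Δₙ^α U`: the `n`-dimensional elements of `U` all of whose covering
elements in `U` cover with sign `α`. -/
def sb (n : ℕ) (α : Bool) (U : Set P.carrier) : Set P.carrier :=
  {x | x ∈ U ∧ P.dim x = n ∧ ∀ y ∈ U, x ⋖ y → P.orient y x = α}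

/-- The boundary `∂ₙ^α U`. -/
def bd (n : ℕ) (α : Bool) (U : Set P.carrier) : Set P.carrier :=
  P.cl (P.sb n α U) ∪ {x | x ∈ U ∧ ∀ y ∈ U, x ≤ y → P.dim y ≤ n}

/-- Dimension of a subset (the maximum of the dimensions of its elements;
`0` if empty). -/
noncomputable def sdim (U : Set P.carrier) : ℕ := sSup (P.dim '' U)

end OGP

/-- A map of oriented graded posets: a function commuting with all boundary
operators `∂ₙ^α` on closures of points. -/
def IsMap (P Q : OGP) (f : P.carrier → Q.carrier) : Prop :=
  ∀ (x : P.carrier) (n : ℕ) (α : Bool),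
    Q.bd n α (Q.cl {f x}) = f '' (P.bd n α (P.cl {x}))

/-- Molecules in an oriented graded poset, defined inductively: atoms
(closed subsets with a greatest element), and pastings `U₁ ∪ U₂` of two
molecules properly contained in the union with
`U₁ ∩ U₂ = ∂ₖ^+ U₁ = ∂ₖ^- U₂`. -/
inductive IsMolecule (P : OGP) : Set P.carrier → Prop
  | atom : ∀ U : Set P.carrier, P.IsClosed U → (∃ x ∈ U, ∀ y ∈ U, y ≤ x) →
      IsMolecule P U
  | paste : ∀ (U₁ U₂ : Set P.carrier) (k : ℕ),
      IsMolecule P U₁ → IsMolecule P U₂ →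
      U₁ ∩ U₂ = P.bd k true U₁ → U₁ ∩ U₂ = P.bd k false U₂ →
      U₁ ≠ U₁ ∪ U₂ → U₂ ≠ U₁ ∪ U₂ →
      IsMolecule P (U₁ ∪ U₂)

/-- `∂^α x`: the boundary of the closure of a single element. -/
def OGP.bdx (P : OGP) (α : Bool) (x : P.carrier) : Set P.carrier :=
  P.bd (P.dim x - 1) α (P.cl {x})

/-- A directed complex: every `∂^α x` is a molecule, and globularity holds. -/
def IsDirectedComplex (P : OGP) : Prop :=
  ∀ (x : P.carrier) (α : Bool),
    IsMolecule P (P.bdx α x) ∧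
    (1 < P.dim x → ∀ β : Bool,
      P.bd (P.dim x - 2) α (P.bdx β x) = P.bd (P.dim x - 2) α (P.cl {x}))

/-- An `n`-molecule `U` has spherical boundary iff for all `k < n`,
`∂ₖ^+ U ∩ ∂ₖ^- U = ∂ₖ₋₁ U` (for `k = 0` the right-hand side is empty). -/
def HasSphericalBoundary (P : OGP) (n : ℕ) (U : Set P.carrier) : Prop :=
  (∀ k : ℕ, 0 < k → k < n →
      P.bd k true U ∩ P.bd k false U = P.bd (k - 1) true U ∪ P.bd (k - 1) false U) ∧
  (0 < n → P.bd 0 true U ∩ P.bd 0 false U = ∅)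

/-- A regular directed complex: a directed complex all of whose atoms have
spherical boundary. -/
def IsRegularDC (P : OGP) : Prop :=
  IsDirectedComplex P ∧ ∀ x : P.carrier, HasSphericalBoundary P (P.dim x) (P.cl {x})

/-- Generating step of the submolecule relation. -/
inductive SubmolStep (P : OGP) : Set P.carrier → Set P.carrier → Prop
  | left : ∀ (U₁ U₂ : Set P.carrier) (k : ℕ),
      IsMolecule P U₁ → IsMolecule P U₂ →
      U₁ ∩ U₂ = P.bd k true U₁ → U₁ ∩ U₂ = P.bd k false U₂ →
      SubmolStep P U₁ (U₁ ∪ U₂)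
  | right : ∀ (U₁ U₂ : Set P.carrier) (k : ℕ),
      IsMolecule P U₁ → IsMolecule P U₂ →
      U₁ ∩ U₂ = P.bd k true U₁ → U₁ ∩ U₂ = P.bd k false U₂ →
      SubmolStep P U₂ (U₁ ∪ U₂)

/-- The submolecule relation: the smallest partial order such that
`U₁, U₂ ⊑ U₁ ∪ U₂` for pastings. -/
def Submol (P : OGP) : Set P.carrier → Set P.carrier → Prop :=
  Relation.ReflTransGen (SubmolStep P)
section Helpers

variable {P : OGP}

theorem subset_cl (U : Set P.carrier) : U ⊆ P.cl U :=
  fun x hx => ⟨x, hx, le_refl x⟩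

theorem cl_mono {U V : Set P.carrier} (h : U ⊆ V) : P.cl U ⊆ P.cl V :=
  fun x ⟨y, hy, hle⟩ => ⟨y, h hy, hle⟩

theorem cl_closed (U : Set P.carrier) : P.IsClosed (P.cl U) :=
  fun x ⟨y, ⟨z, hz, hyz⟩, hxy⟩ => ⟨z, hz, le_trans hxy hyz⟩

theorem cl_eq_self {U : Set P.carrier} (h : P.IsClosed U) : P.cl U = U :=
  Set.Subset.antisymm h (subset_cl U)

theorem cl_union (U V : Set P.carrier) : P.cl (U ∪ V) = P.cl U ∪ P.cl V := by
  ext x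
  constructor
  · rintro ⟨y, hy | hy, hle⟩
    · exact Or.inl ⟨y, hy, hle⟩
    · exact Or.inr ⟨y, hy, hle⟩
  · rintro (⟨y, hy, hle⟩ | ⟨y, hy, hle⟩)
    · exact ⟨y, Or.inl hy, hle⟩
    · exact ⟨y, Or.inr hy, hle⟩

theorem mol_closed {U : Set P.carrier} (h : IsMolecule P U) : P.IsClosed U := by
  induction h with
  | atom U hc _ => exact hc
  | paste U₁ U₂ k _ _ _ _ _ _ ih₁ ih₂ =>
      rintro x ⟨y, hy | hy, hle⟩
      · exact Or.inl (ih₁ ⟨y, hy, hle⟩)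
      · exact Or.inr (ih₂ ⟨y, hy, hle⟩)

theorem mem_closed_of_le {U : Set P.carrier} (h : P.IsClosed U) {x y : P.carrier}
    (hy : y ∈ U) (hxy : x ≤ y) : x ∈ U := h ⟨y, hy, hxy⟩

theorem exists_le_covby {x y : P.carrier} (h : x < y) : ∃ w, x ≤ w ∧ w ⋖ y := by
  classical
  have hs : {w : P.carrier | x ≤ w ∧ w < y}.Nonempty := ⟨x, le_refl x, h⟩
  obtain ⟨m, hm, hmax⟩ := (IsWellFounded.wf (α := P.carrier) (r := (· > ·))).has_min _ hs
  refine ⟨m, hm.1, hm.2, fun c hc hcy => ?_⟩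
  exact hmax c ⟨le_trans hm.1 hc.le, hcy⟩ hc

theorem dim_lt_of_lt {x y : P.carrier} (h : x < y) : P.dim x < P.dim y := by
  induction y using WellFoundedLT.induction generalizing x with
  | _ y ih =>
    obtain ⟨w, hxw, hwy⟩ := exists_le_covby h
    have hd : P.dim y = P.dim w + 1 := P.graded w y hwy
    rcases eq_or_lt_of_le hxw with rfl | hlt
    · omega
    · have := ih w hwy.1 hlt
      omega

theorem dim_le_of_le {x y : P.carrier} (h : x ≤ y) : P.dim x ≤ P.dim y := by
  rcases eq_or_lt_of_le h with rfl | h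
  · exact le_refl _
  · exact (dim_lt_of_lt h).le

theorem eq_of_le_of_dim_ge {x y : P.carrier} (hle : x ≤ y) (hd : P.dim y ≤ P.dim x) :
    x = y := by
  rcases eq_or_lt_of_le hle with rfl | h
  · rfl
  · exact absurd (dim_lt_of_lt h) (by omega)

theorem sb_subset {n : ℕ} {α : Bool} {U : Set P.carrier} : P.sb n α U ⊆ U :=
  fun _ hx => hx.1

theorem dim_of_mem_sb {n : ℕ} {α : Bool} {U : Set P.carrier} {y : P.carrier}
    (h : y ∈ P.sb n α U) : P.dim y = n := h.2.1

theorem mem_bd_iff {n : ℕ} {α : Bool} {U : Set P.carrier} {y : P.carrier} :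
    y ∈ P.bd n α U ↔ y ∈ P.cl (P.sb n α U) ∨ (y ∈ U ∧ ∀ v ∈ U, y ≤ v → P.dim v ≤ n) :=
  Iff.rfl

theorem bd_subset {U : Set P.carrier} (h : P.IsClosed U) (n : ℕ) (α : Bool) :
    P.bd n α U ⊆ U := by
  rintro y (⟨v, hv, hle⟩ | ⟨hy, _⟩)
  · exact mem_closed_of_le h hv.1 hle
  · exact hy

theorem dim_le_of_mem_bd {n : ℕ} {α : Bool} {U : Set P.carrier} {y : P.carrier}
    (h : y ∈ P.bd n α U) : P.dim y ≤ n := by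
  rcases h with ⟨v, hv, hle⟩ | ⟨hy, hm⟩
  · exact le_trans (dim_le_of_le hle) hv.2.1.le
  · exact hm y hy (le_refl y)

theorem bd_eq_self {U : Set P.carrier} (h : P.IsClosed U) {n : ℕ}
    (hdim : ∀ y ∈ U, P.dim y ≤ n) (α : Bool) : P.bd n α U = U := by
  refine Set.Subset.antisymm (bd_subset h n α) fun y hy => Or.inr ⟨hy, fun v hv _ => hdim v hv⟩

/-- A dimension-`n` element of `∂ₙ^α U` is in `Δₙ^α U` or in the max-part. -/
theorem sb_or_max_of_mem_bd {n : ℕ} {α : Bool} {U : Set P.carrier} {y : P.carrier}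
    (h : y ∈ P.bd n α U) (hd : P.dim y = n) :
    y ∈ P.sb n α U ∨ (y ∈ U ∧ ∀ v ∈ U, y ≤ v → P.dim v ≤ n) := by
  rcases h with ⟨v, hv, hle⟩ | hm
  · left
    have : y = v := eq_of_le_of_dim_ge hle (by rw [hd, hv.2.1])
    rwa [this]
  · exact Or.inr hm

/-- In presence of a "big" element above, membership in the boundary forces
membership in the closure of `Δ`. -/
theorem le_sb_of_mem_bd_big {n : ℕ} {α : Bool} {U : Set P.carrier} {y : P.carrier}
    (h : y ∈ P.bd n α U) (hbig : ∃ z ∈ U, y ≤ z ∧ n < P.dim z) :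
    ∃ v, y ≤ v ∧ v ∈ P.sb n α U := by
  rcases h with ⟨v, hv, hle⟩ | ⟨hy, hm⟩
  · exact ⟨v, hle, hv⟩
  · obtain ⟨z, hz, hyz, hdz⟩ := hbig
    exact absurd (hm z hz hyz) (by omega)

theorem sb_of_mem_bd_big {n : ℕ} {α : Bool} {U : Set P.carrier} {y : P.carrier}
    (h : y ∈ P.bd n α U) (hd : P.dim y = n) (hbig : ∃ z ∈ U, y ≤ z ∧ n < P.dim z) :
    y ∈ P.sb n α U := by
  obtain ⟨v, hle, hv⟩ := le_sb_of_mem_bd_big h hbig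
  have : y = v := eq_of_le_of_dim_ge hle (by rw [hd, hv.2.1])
  rwa [this]

end Helpers
section Pasting

variable {P : OGP}

theorem dim_cover {y w : P.carrier} (h : y ⋖ w) : P.dim w = P.dim y + 1 :=
  P.graded y w h

/-- Boundary of a union at the pasting level equals the boundary of the
appropriate side. -/
theorem bd_union_side {U V : Set P.carrier} {k : ℕ} {s : Bool}
    (hcU : P.IsClosed U) (hcV : P.IsClosed V)
    (h : U ∩ V = P.bd k s V) :
    P.bd k s (U ∪ V) = P.bd k s U := by
  have hsbUV : P.sb k s U ⊆ P.sb k s (U ∪ V) := by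
    rintro y ⟨hyU, hyd, hyc⟩
    refine ⟨Or.inl hyU, hyd, ?_⟩
    rintro w (hw | hw) hcov
    · exact hyc w hw hcov
    · have hyV : y ∈ V := mem_closed_of_le hcV hw hcov.1.le
      have hyI : y ∈ P.bd k s V := h ▸ (⟨hyU, hyV⟩ : y ∈ U ∩ V)
      rcases sb_or_max_of_mem_bd hyI hyd with hsb | ⟨_, hm⟩
      · exact hsb.2.2 w hw hcov
      · have := hm w hw hcov.1.le
        have := dim_cover hcov
        omega
  have hsbVU : P.sb k s (U ∪ V) ⊆ P.sb k s U := by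
    rintro y ⟨hyUV, hyd, hyc⟩
    rcases hyUV with hyU | hyV
    · exact ⟨hyU, hyd, fun w hw hcov => hyc w (Or.inl hw) hcov⟩
    · have hysbV : y ∈ P.sb k s V :=
        ⟨hyV, hyd, fun w hw hcov => hyc w (Or.inr hw) hcov⟩
      have : y ∈ U ∩ V := h ▸ (Or.inl (subset_cl _ hysbV) : y ∈ P.bd k s V)
      exact ⟨this.1, hyd, fun w hw hcov => hyc w (Or.inl hw) hcov⟩
  have hsbeq : P.sb k s (U ∪ V) = P.sb k s U := Set.Subset.antisymm hsbVU hsbUV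
  apply Set.Subset.antisymm
  · rintro y (hy | ⟨hyUV, hm⟩)
    · exact Or.inl (hsbeq ▸ hy)
    · rcases hyUV with hyU | hyV
      · exact Or.inr ⟨hyU, fun v hv hle => hm v (Or.inl hv) hle⟩
      · have hyMV : y ∈ P.bd k s V :=
          Or.inr ⟨hyV, fun v hv hle => hm v (Or.inr hv) hle⟩
        have : y ∈ U ∩ V := h ▸ hyMV
        exact Or.inr ⟨this.1, fun v hv hle => hm v (Or.inl hv) hle⟩
  · rintro y (hy | ⟨hyU, hm⟩)
    · exact Or.inl (cl_mono hsbUV hy)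
    · by_cases hbig : ∃ z ∈ V, y ≤ z ∧ k < P.dim z
      · obtain ⟨z, hzV, hyz, hzd⟩ := hbig
        have hyV : y ∈ V := mem_closed_of_le hcV hzV hyz
        have hyI : y ∈ P.bd k s V := h ▸ (⟨hyU, hyV⟩ : y ∈ U ∩ V)
        obtain ⟨v, hyv, hv⟩ := le_sb_of_mem_bd_big hyI ⟨z, hzV, hyz, hzd⟩
        have hvU : v ∈ U := by
          have : v ∈ U ∩ V := h ▸ (Or.inl (subset_cl _ hv) : v ∈ P.bd k s V)
          exact this.1
        refine Or.inl ⟨v, ⟨Or.inl hvU, hv.2.1, ?_⟩, hyv⟩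
        rintro w (hw | hw) hcov
        · have := hm w hw (le_trans hyv hcov.1.le)
          have := dim_cover hcov
          have := hv.2.1
          omega
        · exact hv.2.2 w hw hcov
      · push_neg at hbig
        refine Or.inr ⟨Or.inl hyU, ?_⟩
        rintro v (hv | hv) hle
        · exact hm v hv hle
        · exact hbig v hv hle

theorem sb_union_of_bd_eq {U V : Set P.carrier} {m : ℕ} {α : Bool}
    (heq : P.bd m α U = P.bd m α V) :
    P.sb m α U ⊆ P.sb m α (U ∪ V) := by
  rintro v ⟨hvU, hvd, hvc⟩
  have hvV : v ∈ P.bd m α V := heq ▸ (Or.inl (subset_cl _ ⟨hvU, hvd, hvc⟩) : v ∈ P.bd m α U)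
  refine ⟨Or.inl hvU, hvd, ?_⟩
  rintro w (hw | hw) hcov
  · exact hvc w hw hcov
  · rcases sb_or_max_of_mem_bd hvV hvd with hsb | ⟨_, hm⟩
    · exact hsb.2.2 w hw hcov
    · have := hm w hw hcov.1.le
      have := dim_cover hcov
      omega

/-- Boundary of a union below the pasting level. -/
theorem bd_union_of_bd_eq {U V : Set P.carrier} {m : ℕ} {α : Bool}
    (heq : P.bd m α U = P.bd m α V) :
    P.bd m α (U ∪ V) = P.bd m α U := by
  have key₁ : P.sb m α U ⊆ P.sb m α (U ∪ V) := sb_union_of_bd_eq heq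
  have key₂ : P.sb m α V ⊆ P.sb m α (U ∪ V) := by
    have := sb_union_of_bd_eq (P := P) heq.symm
    rwa [Set.union_comm] at this
  apply Set.Subset.antisymm
  · rintro y (⟨v, hv, hle⟩ | ⟨hyUV, hm⟩)
    · rcases hv.1 with hvU | hvV
      · exact Or.inl ⟨v, ⟨hvU, hv.2.1, fun w hw hcov => hv.2.2 w (Or.inl hw) hcov⟩, hle⟩
      · have : y ∈ P.bd m α V :=
          Or.inl ⟨v, ⟨hvV, hv.2.1, fun w hw hcov => hv.2.2 w (Or.inr hw) hcov⟩, hle⟩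
        exact heq ▸ this
    · rcases hyUV with hyU | hyV
      · exact Or.inr ⟨hyU, fun v hv hle => hm v (Or.inl hv) hle⟩
      · have : y ∈ P.bd m α V := Or.inr ⟨hyV, fun v hv hle => hm v (Or.inr hv) hle⟩
        exact heq ▸ this
  · rintro y (hy | ⟨hyU, hm⟩)
    · exact Or.inl (cl_mono key₁ hy)
    · by_cases hbig : ∃ z ∈ U ∪ V, y ≤ z ∧ m < P.dim z
      · obtain ⟨z, hzUV, hyz, hzd⟩ := hbig
        have hzV : z ∈ V := by
          rcases hzUV with hzU | hzV
          · exact absurd (hm z hzU hyz) (by omega)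
          · exact hzV
        have hyV : y ∈ P.bd m α V := heq ▸ (Or.inr ⟨hyU, hm⟩ : y ∈ P.bd m α U)
        obtain ⟨v, hyv, hv⟩ := le_sb_of_mem_bd_big hyV ⟨z, hzV, hyz, hzd⟩
        exact Or.inl ⟨v, key₂ hv, hyv⟩
      · push_neg at hbig
        exact Or.inr ⟨Or.inl hyU, fun v hv hle => hbig v hv hle⟩

/-- Boundary of a union above the pasting level. -/
theorem bd_union_gt {U V : Set P.carrier} {k m : ℕ} {α : Bool}
    (hcU : P.IsClosed U) (hcV : P.IsClosed V)
    (hp : U ∩ V = P.bd k true U) (hq : U ∩ V = P.bd k false V)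
    (hkm : k < m)
    (hsU : U ∩ V ⊆ P.bd m α U) (hsV : U ∩ V ⊆ P.bd m α V) :
    P.bd m α (U ∪ V) = P.bd m α U ∪ P.bd m α V := by
  have hdimI : ∀ y ∈ U ∩ V, P.dim y ≤ k := by
    intro y hy
    rw [hp] at hy
    exact dim_le_of_mem_bd hy
  have hsbU : P.sb m α U ⊆ P.sb m α (U ∪ V) := by
    rintro y ⟨hyU, hyd, hyc⟩
    refine ⟨Or.inl hyU, hyd, ?_⟩
    rintro w (hw | hw) hcov
    · exact hyc w hw hcov
    · have hyV : y ∈ V := mem_closed_of_le hcV hw hcov.1.le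
      have := hdimI y ⟨hyU, hyV⟩
      omega
  have hsbV : P.sb m α V ⊆ P.sb m α (U ∪ V) := by
    rintro y ⟨hyV, hyd, hyc⟩
    refine ⟨Or.inr hyV, hyd, ?_⟩
    rintro w (hw | hw) hcov
    · have hyU : y ∈ U := mem_closed_of_le hcU hw hcov.1.le
      have := hdimI y ⟨hyU, hyV⟩
      omega
    · exact hyc w hw hcov
  apply Set.Subset.antisymm
  · rintro y (⟨v, hv, hle⟩ | ⟨hyUV, hm⟩)
    · rcases hv.1 with hvU | hvV
      · exact Or.inl (Or.inl ⟨v, ⟨hvU, hv.2.1, fun w hw hcov => hv.2.2 w (Or.inl hw) hcov⟩, hle⟩)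
      · exact Or.inr (Or.inl ⟨v, ⟨hvV, hv.2.1, fun w hw hcov => hv.2.2 w (Or.inr hw) hcov⟩, hle⟩)
    · rcases hyUV with hyU | hyV
      · exact Or.inl (Or.inr ⟨hyU, fun v hv hle => hm v (Or.inl hv) hle⟩)
      · exact Or.inr (Or.inr ⟨hyV, fun v hv hle => hm v (Or.inr hv) hle⟩)
  · rintro y (hy | hy)
    · rcases hy with hy | ⟨hyU, hm⟩
      · exact Or.inl (cl_mono hsbU hy)
      · by_cases hbig : ∃ z ∈ V, y ≤ z ∧ m < P.dim z
        · obtain ⟨z, hzV, hyz, hzd⟩ := hbig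
          have hyV : y ∈ V := mem_closed_of_le hcV hzV hyz
          have hyb : y ∈ P.bd m α V := hsV ⟨hyU, hyV⟩
          obtain ⟨v, hyv, hv⟩ := le_sb_of_mem_bd_big hyb ⟨z, hzV, hyz, hzd⟩
          exact Or.inl ⟨v, hsbV hv, hyv⟩
        · push_neg at hbig
          refine Or.inr ⟨Or.inl hyU, ?_⟩
          rintro v (hv | hv) hle
          · exact hm v hv hle
          · exact hbig v hv hle
    · rcases hy with hy | ⟨hyV, hm⟩
      · exact Or.inl (cl_mono hsbV hy)
      · by_cases hbig : ∃ z ∈ U, y ≤ z ∧ m < P.dim z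
        · obtain ⟨z, hzU, hyz, hzd⟩ := hbig
          have hyU : y ∈ U := mem_closed_of_le hcU hzU hyz
          have hyb : y ∈ P.bd m α U := hsU ⟨hyU, hyV⟩
          obtain ⟨v, hyv, hv⟩ := le_sb_of_mem_bd_big hyb ⟨z, hzU, hyz, hzd⟩
          exact Or.inl ⟨v, hsbU hv, hyv⟩
        · push_neg at hbig
          refine Or.inr ⟨Or.inr hyV, ?_⟩
          rintro v (hv | hv) hle
          · exact hbig v hv hle
          · exact hm v hv hle

end Pasting
section Master

variable {P : OGP}

/-- Each facet (codimension-1 face) of an atom is in the `Δ`-set of its sign. -/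
theorem face_mem_sb {z f : P.carrier} (hfz : f ⋖ z) :
    f ∈ P.sb (P.dim z - 1) (P.orient z f) (P.cl {z}) := by
  have hdz : P.dim z = P.dim f + 1 := P.graded f z hfz
  refine ⟨⟨z, rfl, hfz.1.le⟩, by omega, ?_⟩
  intro v hv hcov
  have hvz : v ≤ z := by
    obtain ⟨w, hw, hvw⟩ := hv
    rw [Set.mem_singleton_iff] at hw
    rwa [hw] at hvw
  have hdv : P.dim v = P.dim f + 1 := P.graded f v hcov
  have hveq : v = z := eq_of_le_of_dim_ge hvz (by omega)
  rw [hveq]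

theorem bool_eq_not {a b : Bool} (h : a ≠ b) : a = !b := by
  cases a <;> cases b <;> simp_all

theorem master (P : OGP) (hP : IsDirectedComplex P) :
    ∀ D U, IsMolecule P U → (∀ y ∈ U, P.dim y ≤ D) →
      (∀ m α, IsMolecule P (P.bd m α U)) ∧
      (∀ k m, k < m → ∀ γ α, P.bd k γ (P.bd m α U) = P.bd k γ U) := by
  intro D
  induction D using Nat.strong_induction_on with
  | _ D IHD =>
  intro U hU
  induction hU with
  | atom U hcl hgr =>
    intro hdim
    obtain ⟨z, hzU, hgz⟩ := hgr
    have hzcl : z ∈ P.cl {z} := ⟨z, rfl, le_refl z⟩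
    have hUcl : U = P.cl {z} := by
      ext y
      constructor
      · intro hy; exact ⟨z, rfl, hgz y hy⟩
      · rintro ⟨w, rfl, hle⟩; exact mem_closed_of_le hcl hzU hle
    subst hUcl
    have hclz : P.IsClosed (P.cl {z}) := cl_closed _
    have hdimcl : ∀ y ∈ P.cl {z}, P.dim y ≤ P.dim z := by
      rintro y ⟨w, rfl, hle⟩; exact dim_le_of_le hle
    have hmolz : IsMolecule P (P.cl {z}) :=
      IsMolecule.atom _ hclz ⟨z, hzcl, fun y hy => by
        obtain ⟨w, rfl, hle⟩ := hy; exact hle⟩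
    have hdD : P.dim z ≤ D := hdim z hzcl
    have hbig : ∀ m, m < P.dim z → ∀ γ,
        P.bd m γ (P.cl {z}) = P.cl (P.sb m γ (P.cl {z})) := by
      intro m hm γ
      apply Set.Subset.antisymm
      · rintro y (hy | ⟨hy, hmx⟩)
        · exact hy
        · obtain ⟨w, rfl, hle⟩ := hy
          exact absurd (hmx w hzcl hle) (by omega)
      · exact fun y hy => Or.inl hy
    -- the trivial levels
    have htriv : ∀ m, P.dim z ≤ m → ∀ α, P.bd m α (P.cl {z}) = P.cl {z} := by
      intro m hm α
      exact bd_eq_self hclz (fun y hy => le_trans (hdimcl y hy) hm) α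
    by_cases hd0 : P.dim z = 0
    · constructor
      · intro m α; rw [htriv m (by omega) α]; exact hmolz
      · intro k m hkm γ α; rw [htriv m (by omega) α]
    -- now dim z ≥ 1
    have hd1 : 1 ≤ P.dim z := by omega
    set W : Bool → Set P.carrier := fun β => P.bd (P.dim z - 1) β (P.cl {z}) with hW
    have hWmol : ∀ β, IsMolecule P (W β) := fun β => (hP z β).1
    have hWcl : ∀ β, P.IsClosed (W β) := fun β => mol_closed (hWmol β)
    have hWsub : ∀ β, W β ⊆ P.cl {z} := fun β => bd_subset hclz _ _
    have hWdim : ∀ β, ∀ y ∈ W β, P.dim y ≤ P.dim z - 1 := fun β y hy =>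
      dim_le_of_mem_bd hy
    have hWpkg : ∀ β, (∀ m α, IsMolecule P (P.bd m α (W β))) ∧
        (∀ k m, k < m → ∀ γ α, P.bd k γ (P.bd m α (W β)) = P.bd k γ (W β)) :=
      fun β => IHD (P.dim z - 1) (by omega) (W β) (hWmol β) (hWdim β)
    have hax2 : 1 < P.dim z → ∀ γ β,
        P.bd (P.dim z - 2) γ (W β) = P.bd (P.dim z - 2) γ (P.cl {z}) :=
      fun h1 γ β => (hP z γ).2 h1 β
    have hCH : ∀ j, j < P.dim z - 1 → ∀ γ β, P.bd j γ (W β) = P.bd j γ (W γ) := by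
      intro j hj γ β
      have h2 : 1 < P.dim z := by omega
      rcases Nat.lt_or_ge j (P.dim z - 2) with hlt | hge
      · calc P.bd j γ (W β) = P.bd j γ (P.bd (P.dim z - 2) γ (W β)) :=
              ((hWpkg β).2 j (P.dim z - 2) hlt γ γ).symm
          _ = P.bd j γ (P.bd (P.dim z - 2) γ (P.cl {z})) := by rw [hax2 h2 γ β]
          _ = P.bd j γ (P.bd (P.dim z - 2) γ (W γ)) := by rw [hax2 h2 γ γ]
          _ = P.bd j γ (W γ) := (hWpkg γ).2 j (P.dim z - 2) hlt γ γ
      · have hj2 : j = P.dim z - 2 := by omega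
        rw [hj2, hax2 h2 γ β, ← hax2 h2 γ γ]
    have hMW : ∀ {j γ β y}, j < P.dim z - 1 → y ∈ P.bd j γ (W β) →
        y ∈ P.cl (P.sb j γ (W β)) := by
      intro j γ β y hj hy
      rcases hy with hy | ⟨hyW, hmx⟩
      · exact hy
      · have hyW' : y ∈ P.bd (P.dim z - 1) β (P.cl {z}) := hyW
        rw [hbig (P.dim z - 1) (by omega) β] at hyW'
        obtain ⟨f, hf, hyf⟩ := hyW'
        have hfW : f ∈ W β := Or.inl (subset_cl _ hf)
        have := hmx f hfW hyf
        have := hf.2.1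
        omega
    have hAT : ∀ j γ, j < P.dim z - 1 → P.sb j γ (P.cl {z}) ⊆ W γ := by
      intro j γ hj y hy
      have hyz : y ≤ z := by obtain ⟨w, rfl, hle⟩ := hy.1; exact hle
      have hylt : y < z := lt_of_le_of_ne hyz (by
        intro h; rw [h] at hy; have := hy.2.1; omega)
      obtain ⟨f, hyf, hfz⟩ := exists_le_covby hylt
      have hff := face_mem_sb hfz
      by_cases hb : P.orient z f = γ
      · rw [hb] at hff
        exact Or.inl ⟨f, hff, hyf⟩
      · have hbb : P.orient z f = !γ := bool_eq_not hb
        rw [hbb] at hff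
        have hyW : y ∈ W (!γ) := Or.inl ⟨f, hff, hyf⟩
        have hysb : y ∈ P.sb j γ (W (!γ)) :=
          ⟨hyW, hy.2.1, fun w hw hcov => hy.2.2 w (hWsub _ hw) hcov⟩
        have hyb : y ∈ P.bd j γ (W (!γ)) := Or.inl (subset_cl _ hysb)
        rw [hCH j hj γ (!γ)] at hyb
        exact bd_subset (hWcl γ) _ _ hyb
    have hAeq : ∀ j γ, j < P.dim z - 1 →
        P.bd j γ (P.cl {z}) = P.bd j γ (W γ) := by
      intro j γ hj
      apply Set.Subset.antisymm
      · intro y hy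
        have hy' : y ∈ P.cl (P.sb j γ (P.cl {z})) := by
          rw [← hbig j (by omega) γ]; exact hy
        obtain ⟨v, hv, hyv⟩ := hy'
        have hvW : v ∈ W γ := hAT j γ hj hv
        exact Or.inl ⟨v, ⟨hvW, hv.2.1, fun w hw hcov => hv.2.2 w (hWsub γ hw) hcov⟩, hyv⟩
      · intro y hy
        obtain ⟨v, hv, hyv⟩ := hMW hj hy
        refine Or.inl ⟨v, ⟨hWsub γ hv.1, hv.2.1, ?_⟩, hyv⟩
        intro w hw hcov
        have hdw : P.dim w = P.dim v + 1 := P.graded v w hcov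
        have hwle : w ≤ z := by obtain ⟨u, rfl, hle⟩ := hw; exact hle
        have hwlt : w < z := lt_of_le_of_ne hwle (by
          intro h; rw [h] at hdw; have := hv.2.1; omega)
        obtain ⟨f, hwf, hfz⟩ := exists_le_covby hwlt
        have hff := face_mem_sb hfz
        by_cases hb : P.orient z f = γ
        · rw [hb] at hff
          have hwW : w ∈ W γ := Or.inl ⟨f, hff, hwf⟩
          exact hv.2.2 w hwW hcov
        · have hbb : P.orient z f = !γ := bool_eq_not hb
          rw [hbb] at hff
          have hwW : w ∈ W (!γ) := Or.inl ⟨f, hff, hwf⟩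
          have hvW' : v ∈ W (!γ) := mem_closed_of_le (hWcl (!γ)) hwW hcov.1.le
          have hvb : v ∈ P.bd j γ (W γ) := Or.inl (subset_cl _ hv)
          rw [← hCH j hj γ (!γ)] at hvb
          obtain ⟨u, hu, hvu⟩ := hMW hj hvb
          have hveq : v = u := eq_of_le_of_dim_ge hvu (by rw [hv.2.1, hu.2.1])
          subst hveq
          exact hu.2.2 w hwW hcov
    constructor
    · intro m α
      rcases le_or_gt (P.dim z) m with hm | hm
      · rw [htriv m hm α]; exact hmolz
      · by_cases hm1 : m = P.dim z - 1
        · rw [hm1]; exact hWmol α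
        · rw [hAeq m α (by omega)]
          exact (hWpkg α).1 m α
    · intro k m hkm γ α
      rcases le_or_gt (P.dim z) m with hm | hm
      · rw [htriv m hm α]
      · by_cases hm1 : m = P.dim z - 1
        · rw [hm1]
          have hk : k < P.dim z - 1 := by omega
          show P.bd k γ (W α) = _
          rw [hCH k hk γ α]
          exact (hAeq k γ hk).symm
        · have hmlt : m < P.dim z - 1 := by omega
          have hk : k < P.dim z - 1 := by omega
          rw [hAeq m α hmlt, (hWpkg α).2 k m hkm γ α, hCH k hk γ α]
          exact (hAeq k γ hk).symm
  | paste U₁ U₂ k h₁ h₂ hip hin hne₁ hne₂ IH₁ IH₂ =>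
    intro hdim
    obtain ⟨hM₁, hG₁⟩ := IH₁ (fun y hy => hdim y (Or.inl hy))
    obtain ⟨hM₂, hG₂⟩ := IH₂ (fun y hy => hdim y (Or.inr hy))
    have hc₁ : P.IsClosed U₁ := mol_closed h₁
    have hc₂ : P.IsClosed U₂ := mol_closed h₂
    have hsub₁ : ∀ {j m : ℕ} (γ α : Bool), j < m → P.bd j γ U₁ ⊆ P.bd m α U₁ := by
      intro j m γ α hjm
      rw [← hG₁ j m hjm γ α]
      exact bd_subset (mol_closed (hM₁ m α)) _ _
    have hsub₂ : ∀ {j m : ℕ} (γ α : Bool), j < m → P.bd j γ U₂ ⊆ P.bd m α U₂ := by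
      intro j m γ α hjm
      rw [← hG₂ j m hjm γ α]
      exact bd_subset (mol_closed (hM₂ m α)) _ _
    have hIs₁ : ∀ {m : ℕ} (α : Bool), k < m → U₁ ∩ U₂ ⊆ P.bd m α U₁ := by
      intro m α hkm y hy
      rw [hip] at hy
      exact hsub₁ true α hkm hy
    have hIs₂ : ∀ {m : ℕ} (α : Bool), k < m → U₁ ∩ U₂ ⊆ P.bd m α U₂ := by
      intro m α hkm y hy
      rw [hin] at hy
      exact hsub₂ false α hkm hy
    have heqlow : ∀ {j : ℕ} (γ : Bool), j < k → P.bd j γ U₁ = P.bd j γ U₂ := by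
      intro j γ hjk
      calc P.bd j γ U₁ = P.bd j γ (P.bd k true U₁) := (hG₁ j k hjk γ true).symm
        _ = P.bd j γ (P.bd k false U₂) := by rw [← hip, hin]
        _ = P.bd j γ U₂ := hG₂ j k hjk γ false
    have hPgt : ∀ {m : ℕ} (α : Bool), k < m →
        P.bd m α (U₁ ∪ U₂) = P.bd m α U₁ ∪ P.bd m α U₂ := fun {m} α hkm =>
      bd_union_gt hc₁ hc₂ hip hin hkm (hIs₁ α hkm) (hIs₂ α hkm)
    have hPfalse : P.bd k false (U₁ ∪ U₂) = P.bd k false U₁ := bd_union_side hc₁ hc₂ hin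
    have hPtrue : P.bd k true (U₁ ∪ U₂) = P.bd k true U₂ := by
      have := bd_union_side (P := P) (U := U₂) (V := U₁) hc₂ hc₁
        (by rw [Set.inter_comm]; exact hip)
      rwa [Set.union_comm] at this
    have hPlt : ∀ {m : ℕ} (α : Bool), m < k → P.bd m α (U₁ ∪ U₂) = P.bd m α U₁ :=
      fun {m} α hmk => bd_union_of_bd_eq (heqlow α hmk)
    have hABint : ∀ {m : ℕ} (α : Bool), k < m →
        P.bd m α U₁ ∩ P.bd m α U₂ = U₁ ∩ U₂ := by
      intro m α hkm
      apply Set.Subset.antisymm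
      · exact fun y hy => ⟨bd_subset hc₁ _ _ hy.1, bd_subset hc₂ _ _ hy.2⟩
      · exact fun y hy => ⟨hIs₁ α hkm hy, hIs₂ α hkm hy⟩
    have hABp : ∀ {m : ℕ} (α : Bool), k < m →
        P.bd m α U₁ ∩ P.bd m α U₂ = P.bd k true (P.bd m α U₁) := by
      intro m α hkm
      rw [hABint α hkm, hip, ← hG₁ k m hkm true α]
    have hABn : ∀ {m : ℕ} (α : Bool), k < m →
        P.bd m α U₁ ∩ P.bd m α U₂ = P.bd k false (P.bd m α U₂) := by
      intro m α hkm
      rw [hABint α hkm, hin, ← hG₂ k m hkm false α]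
    constructor
    · intro m α
      rcases lt_trichotomy k m with hkm | hkm | hkm
      · rw [hPgt α hkm]
        by_cases hA : P.bd m α U₁ ∪ P.bd m α U₂ = P.bd m α U₁
        · rw [hA]; exact hM₁ m α
        · by_cases hB : P.bd m α U₁ ∪ P.bd m α U₂ = P.bd m α U₂
          · rw [hB]; exact hM₂ m α
          · exact IsMolecule.paste _ _ k (hM₁ m α) (hM₂ m α) (hABp α hkm) (hABn α hkm)
              (fun h => hA h.symm) (fun h => hB h.symm)
      · subst hkm
        cases α
        · rw [hPfalse]; exact hM₁ k false
        · rw [hPtrue]; exact hM₂ k true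
      · rw [hPlt α hkm]; exact hM₁ m α
    · intro k' m' hk'm' γ α
      rcases lt_trichotomy k m' with hkm | hkm | hkm
      · rw [hPgt α hkm]
        have hAcl : P.IsClosed (P.bd m' α U₁) := mol_closed (hM₁ m' α)
        have hBcl : P.IsClosed (P.bd m' α U₂) := mol_closed (hM₂ m' α)
        have hGA : P.bd k' γ (P.bd m' α U₁) = P.bd k' γ U₁ := hG₁ k' m' hk'm' γ α
        have hGB : P.bd k' γ (P.bd m' α U₂) = P.bd k' γ U₂ := hG₂ k' m' hk'm' γ α
        rcases lt_trichotomy k k' with hkk | hkk | hkk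
        · have hsA : P.bd m' α U₁ ∩ P.bd m' α U₂ ⊆ P.bd k' γ (P.bd m' α U₁) := by
            intro y hy
            rw [hABint α hkm, hip] at hy
            rw [hGA]
            exact hsub₁ true γ hkk hy
          have hsB : P.bd m' α U₁ ∩ P.bd m' α U₂ ⊆ P.bd k' γ (P.bd m' α U₂) := by
            intro y hy
            rw [hABint α hkm, hin] at hy
            rw [hGB]
            exact hsub₂ false γ hkk hy
          rw [bd_union_gt hAcl hBcl (hABp α hkm) (hABn α hkm) hkk hsA hsB,
            hGA, hGB, ← hPgt γ hkk]
        · subst hkk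
          cases γ
          · rw [bd_union_side hAcl hBcl (hABn α hkm), hGA, ← hPfalse]
          · have := bd_union_side (P := P) (U := P.bd m' α U₂) (V := P.bd m' α U₁)
              hBcl hAcl (by rw [Set.inter_comm]; exact hABp α hkm)
            rw [Set.union_comm] at this
            rw [this, hGB, ← hPtrue]
        · have hAB' : P.bd k' γ (P.bd m' α U₁) = P.bd k' γ (P.bd m' α U₂) := by
            rw [hGA, hGB]; exact heqlow γ hkk
          rw [bd_union_of_bd_eq hAB', hGA, ← hPlt γ hkk]
      · subst hkm
        have hk'k : k' < k := hk'm'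
        cases α
        · rw [hPfalse, hG₁ k' k hk'k γ false, ← hPlt γ hk'k]
        · rw [hPtrue, hG₂ k' k hk'k γ true, ← heqlow γ hk'k, ← hPlt γ hk'k]
      · have hk'k : k' < k := lt_trans hk'm' hkm
        rw [hPlt α hkm, hG₁ k' m' hk'm' γ α, ← hPlt γ hk'k]

end Master
section Final

theorem stmt11_aux (P : OGP) (hDC : IsDirectedComplex P) (n : ℕ) (hn : 0 < n) :
    ∀ U, IsMolecule P U → (∀ y ∈ U, P.dim y ≤ n) →
      ∀ x, x ∈ U → P.dim x = n → (∀ y ∈ U, P.dim y = n → y = x) →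
      ∀ α : Bool, Submol P (P.bd (n - 1) α (P.cl {x})) (P.bd (n - 1) α U) := by
  intro U hU
  induction hU with
  | atom U hcl hgr =>
    intro hdim x hxU hdx huniq α
    obtain ⟨z, hzU, hgz⟩ := hgr
    have hdz : P.dim z = n := by
      have h1 := dim_le_of_le (hgz x hxU)
      have h2 := hdim z hzU
      omega
    have hzx : z = x := huniq z hzU hdz
    subst hzx
    have hUcl : U = P.cl {z} := by
      ext y
      constructor
      · intro hy; exact ⟨z, rfl, hgz y hy⟩
      · rintro ⟨w, hw, hle⟩
        rw [Set.mem_singleton_iff] at hw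
        exact mem_closed_of_le hcl hzU (hw ▸ hle)
    rw [hUcl]
    exact Relation.ReflTransGen.refl
  | paste U₁ U₂ k h₁ h₂ hip hin hne₁ hne₂ IH₁ IH₂ =>
    intro hdim x hxU hdx huniq α
    have hc₁ : P.IsClosed U₁ := mol_closed h₁
    have hc₂ : P.IsClosed U₂ := mol_closed h₂
    have hdim₁ : ∀ y ∈ U₁, P.dim y ≤ n := fun y hy => hdim y (Or.inl hy)
    have hdim₂ : ∀ y ∈ U₂, P.dim y ≤ n := fun y hy => hdim y (Or.inr hy)
    obtain ⟨hM₁, hG₁⟩ := master P hDC n U₁ h₁ hdim₁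
    obtain ⟨hM₂, hG₂⟩ := master P hDC n U₂ h₂ hdim₂
    have hkn : k < n := by
      by_contra h
      push_neg at h
      have he1 : P.bd k true U₁ = U₁ :=
        bd_eq_self hc₁ (fun y hy => le_trans (hdim₁ y hy) h) true
      rw [he1] at hip
      have hsub : U₁ ⊆ U₂ := by
        intro y hy
        rw [← hip] at hy
        exact hy.2
      exact hne₂ (Set.union_eq_self_of_subset_left hsub).symm
    have hxI : x ∉ U₁ ∩ U₂ := by
      intro h
      rw [hip] at h
      have := dim_le_of_mem_bd h
      omega
    rcases hxU with hx1 | hx2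
    · -- x ∈ U₁
      have hx2 : x ∉ U₂ := fun h => hxI ⟨hx1, h⟩
      have hdimU₂ : ∀ y ∈ U₂, P.dim y ≤ n - 1 := by
        intro y hy
        rcases Nat.lt_or_ge (P.dim y) n with h | h
        · omega
        · have hyn : P.dim y = n := le_antisymm (hdim₂ y hy) h
          have := huniq y (Or.inr hy) hyn
          subst this
          exact absurd hy hx2
      have hkm : k < n - 1 := by
        by_contra h
        push_neg at h
        have hk : k = n - 1 := by omega
        have he2 : P.bd k false U₂ = U₂ :=
          bd_eq_self hc₂ (fun y hy => by rw [hk]; exact hdimU₂ y hy) false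
        rw [he2] at hin
        have hsub : U₂ ⊆ U₁ := by
          intro y hy
          rw [← hin] at hy
          exact hy.1
        exact hne₁ (Set.union_eq_self_of_subset_right hsub).symm
      have hsubs₁ : P.bd k true U₁ ⊆ P.bd (n - 1) α U₁ := by
        rw [← hG₁ k (n - 1) hkm true α]
        exact bd_subset (mol_closed (hM₁ (n - 1) α)) _ _
      have hsubs₂ : P.bd k false U₂ ⊆ P.bd (n - 1) α U₂ := by
        rw [← hG₂ k (n - 1) hkm false α]
        exact bd_subset (mol_closed (hM₂ (n - 1) α)) _ _
      have hIs₁ : U₁ ∩ U₂ ⊆ P.bd (n - 1) α U₁ := by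
        intro y hy; rw [hip] at hy; exact hsubs₁ hy
      have hIs₂ : U₁ ∩ U₂ ⊆ P.bd (n - 1) α U₂ := by
        intro y hy; rw [hin] at hy; exact hsubs₂ hy
      have hPgt : P.bd (n - 1) α (U₁ ∪ U₂) = P.bd (n - 1) α U₁ ∪ P.bd (n - 1) α U₂ :=
        bd_union_gt hc₁ hc₂ hip hin hkm hIs₁ hIs₂
      have hABint : P.bd (n - 1) α U₁ ∩ P.bd (n - 1) α U₂ = U₁ ∩ U₂ := by
        apply Set.Subset.antisymm
        · exact fun y hy => ⟨bd_subset hc₁ _ _ hy.1, bd_subset hc₂ _ _ hy.2⟩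
        · exact fun y hy => ⟨hIs₁ hy, hIs₂ hy⟩
      have hABp : P.bd (n - 1) α U₁ ∩ P.bd (n - 1) α U₂ =
          P.bd k true (P.bd (n - 1) α U₁) := by
        rw [hABint, hip, ← hG₁ k (n - 1) hkm true α]
      have hABn : P.bd (n - 1) α U₁ ∩ P.bd (n - 1) α U₂ =
          P.bd k false (P.bd (n - 1) α U₂) := by
        rw [hABint, hin, ← hG₂ k (n - 1) hkm false α]
      have step : SubmolStep P (P.bd (n - 1) α U₁)
          (P.bd (n - 1) α U₁ ∪ P.bd (n - 1) α U₂) :=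
        SubmolStep.left _ _ k (hM₁ _ _) (hM₂ _ _) hABp hABn
      have ih := IH₁ hdim₁ x hx1 hdx (fun y hy hdy => huniq y (Or.inl hy) hdy) α
      rw [hPgt]
      exact Relation.ReflTransGen.tail ih step
    · -- x ∈ U₂
      have hx1 : x ∉ U₁ := fun h => hxI ⟨h, hx2⟩
      have hdimU₁ : ∀ y ∈ U₁, P.dim y ≤ n - 1 := by
        intro y hy
        rcases Nat.lt_or_ge (P.dim y) n with h | h
        · omega
        · have hyn : P.dim y = n := le_antisymm (hdim₁ y hy) h
          have := huniq y (Or.inl hy) hyn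
          subst this
          exact absurd hy hx1
      have hkm : k < n - 1 := by
        by_contra h
        push_neg at h
        have hk : k = n - 1 := by omega
        have he2 : P.bd k true U₁ = U₁ :=
          bd_eq_self hc₁ (fun y hy => by rw [hk]; exact hdimU₁ y hy) true
        rw [he2] at hip
        have hsub : U₁ ⊆ U₂ := by
          intro y hy
          rw [← hip] at hy
          exact hy.2
        exact hne₂ (Set.union_eq_self_of_subset_left hsub).symm
      have hsubs₁ : P.bd k true U₁ ⊆ P.bd (n - 1) α U₁ := by
        rw [← hG₁ k (n - 1) hkm true α]
        exact bd_subset (mol_closed (hM₁ (n - 1) α)) _ _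
      have hsubs₂ : P.bd k false U₂ ⊆ P.bd (n - 1) α U₂ := by
        rw [← hG₂ k (n - 1) hkm false α]
        exact bd_subset (mol_closed (hM₂ (n - 1) α)) _ _
      have hIs₁ : U₁ ∩ U₂ ⊆ P.bd (n - 1) α U₁ := by
        intro y hy; rw [hip] at hy; exact hsubs₁ hy
      have hIs₂ : U₁ ∩ U₂ ⊆ P.bd (n - 1) α U₂ := by
        intro y hy; rw [hin] at hy; exact hsubs₂ hy
      have hPgt : P.bd (n - 1) α (U₁ ∪ U₂) = P.bd (n - 1) α U₁ ∪ P.bd (n - 1) α U₂ :=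
        bd_union_gt hc₁ hc₂ hip hin hkm hIs₁ hIs₂
      have hABint : P.bd (n - 1) α U₁ ∩ P.bd (n - 1) α U₂ = U₁ ∩ U₂ := by
        apply Set.Subset.antisymm
        · exact fun y hy => ⟨bd_subset hc₁ _ _ hy.1, bd_subset hc₂ _ _ hy.2⟩
        · exact fun y hy => ⟨hIs₁ hy, hIs₂ hy⟩
      have hABp : P.bd (n - 1) α U₁ ∩ P.bd (n - 1) α U₂ =
          P.bd k true (P.bd (n - 1) α U₁) := by
        rw [hABint, hip, ← hG₁ k (n - 1) hkm true α]
      have hABn : P.bd (n - 1) α U₁ ∩ P.bd (n - 1) α U₂ =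
          P.bd k false (P.bd (n - 1) α U₂) := by
        rw [hABint, hin, ← hG₂ k (n - 1) hkm false α]
      have step : SubmolStep P (P.bd (n - 1) α U₂)
          (P.bd (n - 1) α U₁ ∪ P.bd (n - 1) α U₂) :=
        SubmolStep.right _ _ k (hM₁ _ _) (hM₂ _ _) hABp hABn
      have ih := IH₂ hdim₂ x hx2 hdx (fun y hy hdy => huniq y (Or.inr hy) hdy) α
      rw [hPgt]
      exact Relation.ReflTransGen.tail ih step

end Final

/-- if an `n`-molecule `U` in a regular directed complex has a
unique `n`-dimensional element `x`, then `∂^α x` is a submolecule of `∂^α U`. -/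
theorem stmt11 (P : OGP) (hP : IsRegularDC P) (U : Set P.carrier) (n : ℕ) (hn : 0 < n)
    (hU : IsMolecule P U) (hd : ∀ y ∈ U, P.dim y ≤ n) (he : ∃ y ∈ U, P.dim y = n)
    (x : P.carrier) (hx : x ∈ U) (hdx : P.dim x = n)
    (huniq : ∀ y ∈ U, P.dim y = n → y = x) :
    ∀ α : Bool, Submol P (P.bd (n - 1) α (P.cl {x})) (P.bd (n - 1) α U) :=
  stmt11_aux P hP.1 n hn U hU hd x hx hdx huniq
end

section
/- Let f: P → Q be a C-functor and U ⊆ P a closed subset. Then dim U = dim f(U). Consequently, f is injective as a function on closed subsets of P. -/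
/-- A `C`-functor between directed complexes: a function on closed subsets
preserving unions and binary intersections, commuting with boundaries of
atoms, and sending atoms to `C`-molecules. -/
structure CFun (P Q : OGP) (C : Set Q.carrier → Prop) where
  toFun : Set P.carrier → Set Q.carrier
  map_unions : ∀ S : Set (Set P.carrier), (∀ U ∈ S, P.IsClosed U) →
    toFun (⋃₀ S) = ⋃₀ (toFun '' S)
  map_inter : ∀ U V : Set P.carrier, P.IsClosed U → P.IsClosed V →
    toFun (U ∩ V) = toFun U ∩ toFun V
  map_bd : ∀ (x : P.carrier) (n : ℕ) (α : Bool),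
    Q.bd n α (toFun (P.cl {x})) = toFun (P.bd n α (P.cl {x}))
  atom_mol : ∀ x : P.carrier,
    IsMolecule Q (toFun (P.cl {x})) ∧ C (toFun (P.cl {x}))


/-! The image of an atom `cl {x}` has dimension at most `dim x`, because `∂_{dim x}` fixes
`cl {x}` and `f` commutes with boundaries. If it had dimension `m < dim x`, then `f` would send
both `∂ₘ^± (cl {x})` onto `f (cl {x})`; by sphericity their intersection is `∂_{m-1}^+ ∪ ∂_{m-1}^-`
(or empty when `m = 0`), so `f (cl {x})` would have dimension `< m`, or be empty, which a
molecule is not. Since a closed set is the union of the atoms below its elements, `f` preserves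
dimension. For injectivity, if `f U ⊆ f V` and `x ∈ U`, then `f (cl {x} ∩ V) = f (cl {x})`, so
`cl {x} ∩ V` contains an element of dimension `dim x` below `x`, which can only be `x`. -/

namespace OGP

variable {P : OGP}

lemma mem_cl_singleton {x z : P.carrier} : z ∈ P.cl {x} ↔ z ≤ x := by
  simp [cl]

lemma isClosed_cl (U : Set P.carrier) : P.IsClosed (P.cl U) := by
  rintro x ⟨y, ⟨z, hz, hyz⟩, hxy⟩
  exact ⟨z, hz, hxy.trans hyz⟩

lemma IsClosed.inter {U V : Set P.carrier} (hU : P.IsClosed U) (hV : P.IsClosed V) :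
    P.IsClosed (U ∩ V) := by
  rintro z ⟨y, hy, hzy⟩
  exact ⟨hU ⟨y, hy.1, hzy⟩, hV ⟨y, hy.2, hzy⟩⟩

lemma IsClosed.cl_singleton_subset {U : Set P.carrier} (hU : P.IsClosed U) {x : P.carrier}
    (hx : x ∈ U) : P.cl {x} ⊆ U :=
  fun _ hz => hU ⟨x, hx, mem_cl_singleton.1 hz⟩

lemma IsClosed.sUnion_cl_singleton {U : Set P.carrier} (hU : P.IsClosed U) :
    ⋃₀ ((fun x => P.cl {x}) '' U) = U := by
  apply Set.Subset.antisymm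
  · rintro z ⟨_, ⟨y, hy, rfl⟩, hzy⟩
    exact hU.cl_singleton_subset hy hzy
  · intro z hz
    exact ⟨P.cl {z}, ⟨z, hz, rfl⟩, mem_cl_singleton.2 le_rfl⟩

lemma dim_strictMono : StrictMono P.dim := by
  intro x y hxy
  induction y using WellFoundedLT.induction with
  | _ y ih =>
    obtain ⟨z, hxz, hzy⟩ := exists_le_covBy_of_lt hxy
    rw [P.graded z y hzy]
    rcases hxz.lt_or_eq with hlt | rfl
    · exact (ih z hzy.lt hlt).trans (Nat.lt_succ_self _)
    · exact Nat.lt_succ_self _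

lemma eq_of_le_of_dim_eq {x y : P.carrier} (hyx : y ≤ x) (hdim : P.dim y = P.dim x) : y = x :=
  hyx.lt_or_eq.resolve_left fun hlt => (dim_strictMono hlt).ne hdim

lemma sdim_le_iff {U : Set P.carrier} {n : ℕ} : P.sdim U ≤ n ↔ ∀ x ∈ U, P.dim x ≤ n := by
  rcases U.eq_empty_or_nonempty with rfl | hne
  · simp [sdim]
  · rw [sdim, csSup_le_iff ((Set.toFinite U).image P.dim).bddAbove (hne.image _)]
    simp

lemma dim_le_sdim {U : Set P.carrier} {x : P.carrier} (hx : x ∈ U) : P.dim x ≤ P.sdim U :=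
  sdim_le_iff.1 le_rfl x hx

lemma exists_dim_eq_sdim {U : Set P.carrier} (hU : U.Nonempty) :
    ∃ x ∈ U, P.dim x = P.sdim U :=
  Nat.sSup_mem (hU.image P.dim) ((Set.toFinite U).image P.dim).bddAbove

lemma dim_le_of_mem_bd {U : Set P.carrier} {n : ℕ} {α : Bool} {x : P.carrier}
    (hx : x ∈ P.bd n α U) : P.dim x ≤ n := by
  rcases hx with ⟨y, ⟨_, hyn, _⟩, hxy⟩ | ⟨hxU, hmax⟩
  · exact hyn ▸ dim_strictMono.monotone hxy
  · exact hmax x hxU le_rfl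

lemma sdim_bd_le (U : Set P.carrier) (n : ℕ) (α : Bool) : P.sdim (P.bd n α U) ≤ n :=
  sdim_le_iff.2 fun _ => dim_le_of_mem_bd

lemma bd_of_sdim_le {U : Set P.carrier} (hU : P.IsClosed U) {n : ℕ} (hn : P.sdim U ≤ n)
    (α : Bool) : P.bd n α U = U := by
  apply Set.Subset.antisymm
  · rintro x (⟨y, ⟨hyU, -⟩, hxy⟩ | ⟨hxU, -⟩)
    exacts [hU ⟨y, hyU, hxy⟩, hxU]
  · exact fun x hx => Or.inr ⟨hx, fun y hy _ => sdim_le_iff.1 hn y hy⟩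

lemma sdim_cl_singleton (x : P.carrier) : P.sdim (P.cl {x}) = P.dim x :=
  le_antisymm (sdim_le_iff.2 fun _ hz => dim_strictMono.monotone (mem_cl_singleton.1 hz))
    (dim_le_sdim (mem_cl_singleton.2 le_rfl))

lemma isClosed_bd_cl_singleton {x : P.carrier} {n : ℕ} (hn : n < P.dim x) (α : Bool) :
    P.IsClosed (P.bd n α (P.cl {x})) := by
  have htop : P.bd n α (P.cl {x}) = P.cl (P.sb n α (P.cl {x})) := by
    refine Set.union_eq_left.2 fun w ⟨_, hmax⟩ => ?_
    exact absurd (hmax x (mem_cl_singleton.2 le_rfl) (mem_cl_singleton.1 ‹_›)) hn.not_ge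
  rw [htop]
  exact isClosed_cl _

end OGP

namespace IsMolecule

variable {P : OGP} {U : Set P.carrier}

lemma isClosed (h : IsMolecule P U) : P.IsClosed U := by
  induction h with
  | atom U hU _ => exact hU
  | paste U₁ U₂ _ _ _ _ _ _ _ ih₁ ih₂ =>
    rintro x ⟨y, hy | hy, hxy⟩
    exacts [Or.inl (ih₁ ⟨y, hy, hxy⟩), Or.inr (ih₂ ⟨y, hy, hxy⟩)]

lemma nonempty (h : IsMolecule P U) : U.Nonempty := by
  induction h with
  | atom U _ hx => obtain ⟨x, hx, -⟩ := hx; exact ⟨x, hx⟩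
  | paste _ _ _ _ _ _ _ _ _ ih₁ _ => exact ih₁.mono Set.subset_union_left

end IsMolecule

namespace CFun

variable {P Q : OGP} {C : Set Q.carrier → Prop} (f : CFun P Q C)

lemma map_empty : f.toFun ∅ = ∅ := by
  simpa using f.map_unions ∅ (by simp)

lemma map_union {U V : Set P.carrier} (hU : P.IsClosed U) (hV : P.IsClosed V) :
    f.toFun (U ∪ V) = f.toFun U ∪ f.toFun V := by
  have hclosed : ∀ W ∈ ({U, V} : Set (Set P.carrier)), P.IsClosed W := by
    rintro W (rfl | rfl)
    exacts [hU, hV]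
  simpa [Set.sUnion_pair, Set.image_pair] using f.map_unions {U, V} hclosed

lemma map_mono {U V : Set P.carrier} (hU : P.IsClosed U) (hV : P.IsClosed V) (hUV : U ⊆ V) :
    f.toFun U ⊆ f.toFun V := by
  rw [← Set.union_eq_right.2 hUV, f.map_union hU hV]
  exact Set.subset_union_left

lemma map_eq_sUnion {U : Set P.carrier} (hU : P.IsClosed U) :
    f.toFun U = ⋃₀ ((fun x => f.toFun (P.cl {x})) '' U) := by
  conv_lhs => rw [← hU.sUnion_cl_singleton]
  rw [f.map_unions _ (by rintro _ ⟨y, -, rfl⟩; exact P.isClosed_cl _), Set.image_image]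

lemma sdim_map_cl_singleton_le (x : P.carrier) :
    Q.sdim (f.toFun (P.cl {x})) ≤ P.dim x := by
  have hbd : Q.bd (P.dim x) true (f.toFun (P.cl {x})) = f.toFun (P.cl {x}) := by
    rw [f.map_bd, P.bd_of_sdim_le (P.isClosed_cl _) (P.sdim_cl_singleton x).le]
  exact hbd ▸ Q.sdim_bd_le _ _ _

lemma sdim_map_cl_singleton {x : P.carrier}
    (hx : HasSphericalBoundary P (P.dim x) (P.cl {x})) :
    Q.sdim (f.toFun (P.cl {x})) = P.dim x := by
  refine (f.sdim_map_cl_singleton_le x).antisymm (not_lt.1 fun hm => ?_)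
  set A := f.toFun (P.cl {x})
  set m := Q.sdim A
  have hA : Q.IsClosed A ∧ A.Nonempty := ⟨(f.atom_mol x).1.isClosed, (f.atom_mol x).1.nonempty⟩
  have hbd : ∀ α, f.toFun (P.bd m α (P.cl {x})) = A := fun α => by
    rw [← f.map_bd, Q.bd_of_sdim_le hA.1 le_rfl]
  have hinter : f.toFun (P.bd m true (P.cl {x}) ∩ P.bd m false (P.cl {x})) = A := by
    rw [f.map_inter _ _ (P.isClosed_bd_cl_singleton hm _) (P.isClosed_bd_cl_singleton hm _),
      hbd, hbd, Set.inter_self]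
  rcases Nat.eq_zero_or_pos m with hm0 | hmpos
  · rw [hm0, hx.2 (hm0 ▸ hm), f.map_empty] at hinter
    exact hA.2.ne_empty hinter.symm
  · have hm' : m - 1 < P.dim x := by omega
    rw [hx.1 m hmpos hm, f.map_union (P.isClosed_bd_cl_singleton hm' _)
      (P.isClosed_bd_cl_singleton hm' _), ← f.map_bd, ← f.map_bd] at hinter
    obtain ⟨v, hv, hdv⟩ := Q.exists_dim_eq_sdim hA.2
    have hle : Q.dim v ≤ m - 1 := by
      rw [← hinter] at hv
      rcases hv with hv | hv <;> exact Q.dim_le_of_mem_bd hv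
    omega

lemma sdim_map (hP : ∀ x : P.carrier, HasSphericalBoundary P (P.dim x) (P.cl {x}))
    {U : Set P.carrier} (hU : P.IsClosed U) : Q.sdim (f.toFun U) = P.sdim U := by
  refine le_antisymm (Q.sdim_le_iff.2 fun z hz => ?_) (P.sdim_le_iff.2 fun x hx => ?_)
  · rw [f.map_eq_sUnion hU] at hz
    obtain ⟨_, ⟨y, hy, rfl⟩, hzy⟩ := hz
    calc Q.dim z ≤ Q.sdim (f.toFun (P.cl {y})) := Q.dim_le_sdim hzy
      _ = P.dim y := f.sdim_map_cl_singleton (hP y)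
      _ ≤ P.sdim U := P.dim_le_sdim hy
  · calc P.dim x = Q.sdim (f.toFun (P.cl {x})) := (f.sdim_map_cl_singleton (hP x)).symm
      _ ≤ Q.sdim (f.toFun U) :=
        Q.sdim_le_iff.2 fun _ hz => Q.dim_le_sdim
          (f.map_mono (P.isClosed_cl _) hU (hU.cl_singleton_subset hx) hz)

lemma subset_of_map_subset
    (hP : ∀ x : P.carrier, HasSphericalBoundary P (P.dim x) (P.cl {x})) {U V : Set P.carrier} (hU : P.IsClosed U) (hV : P.IsClosed V)
    (hUV : f.toFun U ⊆ f.toFun V) : U ⊆ V := by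
  intro x hx
  have hcl : P.IsClosed (P.cl {x}) := P.isClosed_cl _
  have hmap : f.toFun (P.cl {x} ∩ V) = f.toFun (P.cl {x}) := by
    rw [f.map_inter _ _ hcl hV, Set.inter_eq_left]
    exact (f.map_mono hcl hU (hU.cl_singleton_subset hx)).trans hUV
  have hne : (P.cl {x} ∩ V).Nonempty := by
    rw [Set.nonempty_iff_ne_empty]
    rintro hempty
    rw [hempty, f.map_empty] at hmap
    exact (f.atom_mol x).1.nonempty.ne_empty hmap.symm
  obtain ⟨y, ⟨hyx, hyV⟩, hdy⟩ := P.exists_dim_eq_sdim hne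
  rw [← f.sdim_map hP (hcl.inter hV), hmap, f.sdim_map_cl_singleton (hP x)] at hdy
  rwa [← P.eq_of_le_of_dim_eq (OGP.mem_cl_singleton.1 hyx) hdy]

end CFun

theorem stmt16_general (P Q : OGP) (hP : IsRegularDC P)
    (C : Set Q.carrier → Prop) (f : CFun P Q C) :
    (∀ U : Set P.carrier, P.IsClosed U → P.sdim U = Q.sdim (f.toFun U)) ∧
    (∀ U V : Set P.carrier, P.IsClosed U → P.IsClosed V →
      f.toFun U = f.toFun V → U = V) :=
  ⟨fun _ hU => (f.sdim_map hP.2 hU).symm, fun _ _ hU hV hUV =>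
    (f.subset_of_map_subset hP.2 hU hV hUV.le).antisymm
      (f.subset_of_map_subset hP.2 hV hU hUV.ge)⟩

/-- a `C`-functor preserves the dimension of closed subsets,
and consequently is injective on closed subsets. -/
theorem stmt16 (P Q : OGP) (hP : IsRegularDC P) (hQ : IsRegularDC Q)
    (C : Set Q.carrier → Prop) (f : CFun P Q C) :
    (∀ U : Set P.carrier, P.IsClosed U → P.sdim U = Q.sdim (f.toFun U)) ∧
    (∀ U V : Set P.carrier, P.IsClosed U → P.IsClosed V →
      f.toFun U = f.toFun V → U = V) :=
  stmt16_general P Q hP C f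
end
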